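/- For every real t > 1/2, the point it in the complex upper half-plane is not equivalent to i/2 under the action of Γ₀(4) by fractional linear transformations; that is, there is no matrix M = (a b; c d) in SL₂(ℤ) with 4 ∣ c such that M·(i/2) = it. -/

import Mathlib

open Complex Real MeasureTheory Set

/-- Sum of divisors function σ₁(n) = ∑_{d∣n} d. -/
def sigma1 (n : ℕ) : ℕ := ∑ d ∈ n.divisors, d

/-- The Jacobi theta function θ(z) = ∑_{n∈ℤ} q^{n²}, q = e^{2πiz}. -/
noncomputable def Theta (z : ℂ) : ℂ :=
  ∑' n : ℤ, Complex.exp (2 * Real.pi * Complex.I * z * (n : ℂ) ^ 2)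

/-- F₂(z) = ∑_{n≥1, n odd} σ₁(n) q^n, q = e^{2πiz}. -/
noncomputable def F₂ (z : ℂ) : ℂ :=
  ∑' n : ℕ, if Odd n then (sigma1 n : ℂ) * Complex.exp (2 * Real.pi * Complex.I * z) ^ n else 0

/-- Δ₄(z) = F₂(z)·(θ(z)⁴ − 16 F₂(z)). -/
noncomputable def Δ₄ (z : ℂ) : ℂ := F₂ z * (Theta z ^ 4 - 16 * F₂ z)

/-- D₂(z) = θ(z)⁴ − 32 F₂(z). -/
noncomputable def D₂ (z : ℂ) : ℂ := Theta z ^ 4 - 32 * F₂ z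

/-! A real Möbius map of determinant 1 sends `z` to a point of imaginary part
`Im z / |c z + d|²`. For `c` even, `|c i/2 + d|² = (c/2)² + d²` is a positive integer, so
the image of `i/2` has imaginary part at most `1/2`. -/

theorem im_real_mobius (a b c d : ℝ) (z : ℂ) :
    ((a * z + b) / (c * z + d)).im = (a * d - b * c) * z.im / normSq (c * z + d) := by
  rw [div_im]
  simp only [add_re, add_im, mul_re, mul_im, ofReal_re, ofReal_im]
  ring

theorem one_le_normSq_mul_I_half_add {c d : ℤ} (hc : 2 ∣ c) (hcd : c ≠ 0 ∨ d ≠ 0) :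
    1 ≤ normSq ((c : ℂ) * (I / 2) + d) := by
  obtain ⟨m, rfl⟩ := hc
  have hmd : 1 ≤ m ^ 2 + d ^ 2 := by
    rcases hcd with hm | hd
    · nlinarith [Int.one_le_abs (right_ne_zero_of_mul hm), sq_abs m, sq_nonneg d]
    · nlinarith [Int.one_le_abs hd, sq_abs d, sq_nonneg m]
  have hnormSq : normSq (((2 * m : ℤ) : ℂ) * (I / 2) + d) = ((m ^ 2 + d ^ 2 : ℤ) : ℝ) := by
    simp [normSq_apply]
    ring
  rw [hnormSq]
  exact_mod_cast hmd

theorem not_Gamma0_equiv_half_i (t : ℝ) (ht : 1 / 2 < t) :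
    ¬ ∃ a b c d : ℤ, a * d - b * c = 1 ∧ (4 : ℤ) ∣ c ∧
      ((a : ℂ) * (Complex.I / 2) + (b : ℂ)) / ((c : ℂ) * (Complex.I / 2) + (d : ℂ))
        = (t : ℂ) * Complex.I := by
  rintro ⟨a, b, c, d, hdet, hc, h⟩
  have hcd : c ≠ 0 ∨ d ≠ 0 := by
    by_contra! h0
    simp [h0.1, h0.2] at hdet
  have hN := one_le_normSq_mul_I_half_add (dvd_trans (by norm_num) hc) hcd
  have him := congrArg Complex.im h
  have hdetR : (a : ℝ) * d - b * c = 1 := by exact_mod_cast hdet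
  rw [← ofReal_intCast, ← ofReal_intCast b, ← ofReal_intCast c, ← ofReal_intCast d,
    im_real_mobius] at him
  simp only [ofReal_intCast, hdetR, div_ofNat_im, I_im, one_mul, mul_im, ofReal_re, I_re,
    ofReal_im, mul_zero, add_zero, mul_one] at him
  have ht_le : t ≤ 1 / 2 := by
    rw [← him, div_div]
    exact div_le_div_of_nonneg_left (by norm_num) (by norm_num) (by linarith)
  linarith
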